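/- Let κ be an infinite cardinal and let K be a connected compact Hausdorff space of weight at most κ such that every connected compact Hausdorff space of weight at most κ is a continuous image of K. Then every real Banach space of density character at most κ admits a linear isometric embedding into the Banach space C(K, ℝ) of continuous real-valued functions on K with the supremum norm. -/

import Mathlib

open Cardinal

/-- The weight of a topological space: the smallest cardinality of a base for its topology. -/
noncomputable def topWeight (X : Type u) [TopologicalSpace X] : Cardinal.{u} :=
  sInf { c | ∃ B : Set (Set X), TopologicalSpace.IsTopologicalBasis B ∧ #B = c }

/-- The density character of a topological space: the smallest cardinality of a dense subset. -/
noncomputable def densityChar (X : Type u) [TopologicalSpace X] : Cardinal.{u} :=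
  sInf { c | ∃ s : Set X, Dense s ∧ #s = c }

/-!
Dualize: every `x` is normed by a functional in the dual unit ball `B`, so `X` embeds isometrically
into `C(B, ℝ)` for `B` with the weak-* topology, and composing with a continuous surjection
`K → B` keeps the embedding isometric. By Banach–Alaoglu `B` is compact, it is convex and hence
connected, and evaluation on a dense set of cardinality `densityChar X` embeds it into a product of
that many real lines, so its weight is at most `κ`.
-/

open TopologicalSpace Set

theorem Cardinal.mk_finset_le_max (α : Type u) : #(Finset α) ≤ max ℵ₀ #α := by
  cases finite_or_infinite α
  · exact mk_le_aleph0.trans (le_max_left _ _)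
  · exact (mk_finset_of_infinite α).le.trans (le_max_right _ _)

theorem topWeight_le_mk {X : Type u} [TopologicalSpace X] {B : Set (Set X)}
    (hB : IsTopologicalBasis B) : topWeight X ≤ #B :=
  csInf_le' ⟨B, hB, rfl⟩

theorem exists_isTopologicalBasis_mk_eq_topWeight (X : Type u) [TopologicalSpace X] :
    ∃ B : Set (Set X), IsTopologicalBasis B ∧ #B = topWeight X :=
  csInf_mem (s := {c | ∃ B : Set (Set X), IsTopologicalBasis B ∧ #B = c})
    ⟨_, _, isTopologicalBasis_opens, rfl⟩

theorem exists_dense_mk_eq_densityChar (X : Type u) [TopologicalSpace X] :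
    ∃ s : Set X, Dense s ∧ #s = densityChar X :=
  csInf_mem (s := {c | ∃ s : Set X, Dense s ∧ #s = c}) ⟨_, _, dense_univ, rfl⟩

theorem Topology.IsInducing.topWeight_le {X Y : Type u} [TopologicalSpace X] [TopologicalSpace Y]
    {e : X → Y} (he : Topology.IsInducing e) : topWeight X ≤ topWeight Y := by
  obtain ⟨B, hB, hBcard⟩ := exists_isTopologicalBasis_mk_eq_topWeight Y
  calc topWeight X ≤ #(preimage e '' B) := topWeight_le_mk (hB.isInducing he)
    _ ≤ #B := mk_image_le
    _ = topWeight Y := hBcard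

theorem topWeight_pi_le (ι : Type u) (Y : Type v) [TopologicalSpace Y]
    [SecondCountableTopology Y] :
    topWeight (ι → Y) ≤ max ℵ₀ (lift.{v} #ι) := by
  classical
  obtain ⟨b, hbc, -, hb⟩ := exists_countable_basis Y
  have : Countable b := hbc.to_subtype
  let cylinder : Finset (ι × b) → Set (ι → Y) := fun F =>
    {x | ∀ p ∈ F, x p.1 ∈ (p.2 : Set Y)}
  have hsub : {S | ∃ (U : ι → Set Y) (F : Finset ι), (∀ i ∈ F, U i ∈ b) ∧ S = (F : Set ι).pi U}
      ⊆ range cylinder := by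
    rintro _ ⟨U, F, hU, rfl⟩
    refine ⟨F.attach.image fun i : F => (i.1, ⟨U i, hU i i.2⟩), ?_⟩
    ext x
    simp only [cylinder, Finset.mem_image, Finset.mem_attach, true_and, mem_ofPred_eq, mem_pi,
      Finset.mem_coe]
    constructor
    · intro h i hi
      exact h _ ⟨⟨i, hi⟩, rfl⟩
    · rintro h _ ⟨⟨i, hi⟩, rfl⟩
      exact h i hi
  calc topWeight (ι → Y) ≤ _ := topWeight_le_mk (isTopologicalBasis_pi fun _ => hb)
    _ ≤ #(range cylinder) := mk_le_mk_of_subset hsub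
    _ ≤ #(Finset (ι × b)) := mk_range_le
    _ ≤ max ℵ₀ #(ι × b) := mk_finset_le_max _
    _ ≤ max ℵ₀ (lift.{v} #ι) := by
      refine max_le (le_max_left _ _) ?_
      rw [mk_prod]
      refine (mul_le_max _ _).trans (max_le (max_le (le_max_right _ _) ?_) (le_max_left _ _))
      exact (lift_le_aleph0.mpr mk_le_aleph0).trans (le_max_left _ _)

noncomputable section

namespace WeakDual

open Metric

variable (𝕜 E : Type*) [RCLike 𝕜] [NormedAddCommGroup E] [NormedSpace 𝕜 E]

def closedUnitBall : Set (WeakDual 𝕜 E) := toStrongDual ⁻¹' closedBall 0 1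

variable {𝕜 E}

theorem mem_closedUnitBall {φ : WeakDual 𝕜 E} : φ ∈ closedUnitBall 𝕜 E ↔ ‖toStrongDual φ‖ ≤ 1 :=
  mem_closedBall_zero_iff

instance : CompactSpace (closedUnitBall 𝕜 E) :=
  isCompact_iff_compactSpace.mp (isCompact_closedBall 0 1)

instance {E : Type*} [NormedAddCommGroup E] [NormedSpace ℝ E] :
    ConnectedSpace (closedUnitBall ℝ E) :=
  have hconvex : Convex ℝ (closedUnitBall ℝ E) :=
    (convex_closedBall (0 : StrongDual ℝ E) 1).linear_preimage toStrongDual.toLinearMap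
  Subtype.connectedSpace (hconvex.isConnected ⟨0, mem_closedUnitBall.mpr (by simp)⟩)

theorem isClosedEmbedding_restrict_closedUnitBall {s : Set E} (hs : Dense s) :
    Topology.IsClosedEmbedding fun (φ : closedUnitBall 𝕜 E) (x : s) => (φ : WeakDual 𝕜 E) x := by
  refine Continuous.isClosedEmbedding
    (continuous_pi fun x => (eval_continuous (x : E)).comp continuous_subtype_val) ?_
  intro φ ψ h
  have hagree : EqOn (φ : WeakDual 𝕜 E) (ψ : WeakDual 𝕜 E) s := fun x hx => congrFun h ⟨x, hx⟩
  exact Subtype.ext (DFunLike.coe_injective (Continuous.ext_on hs (map_continuous _)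
    (map_continuous _) hagree))

theorem topWeight_closedUnitBall_le {E : Type u} [NormedAddCommGroup E] [NormedSpace ℝ E] :
    topWeight (closedUnitBall ℝ E) ≤ max ℵ₀ (densityChar E) := by
  obtain ⟨s, hs, hcard⟩ := exists_dense_mk_eq_densityChar E
  calc topWeight (closedUnitBall ℝ E) ≤ topWeight (s → ℝ) :=
        (isClosedEmbedding_restrict_closedUnitBall hs).isInducing.topWeight_le
    _ ≤ max ℵ₀ (densityChar E) := by simpa [hcard] using topWeight_pi_le s ℝ

variable {K : Type*} [TopologicalSpace K]

@[simps]
def evalOn (f : C(K, WeakDual 𝕜 E)) : E →ₗ[𝕜] C(K, 𝕜) where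
  toFun x := ⟨fun k => f k x, (eval_continuous x).comp f.continuous⟩
  map_add' x y := by ext; simp
  map_smul' c x := by ext; simp

variable [CompactSpace K]

theorem norm_evalOn_apply_le {f : C(K, WeakDual 𝕜 E)} (hf : ∀ k, f k ∈ closedUnitBall 𝕜 E)
    (x : E) : ‖evalOn f x‖ ≤ ‖x‖ :=
  (ContinuousMap.norm_le _ (norm_nonneg x)).mpr fun k =>
    (toStrongDual (f k)).le_of_opNorm_le (mem_closedUnitBall.mp (hf k)) x |>.trans_eq (one_mul _)

theorem norm_le_norm_evalOn_apply {f : C(K, WeakDual 𝕜 E)}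
    (hf : closedUnitBall 𝕜 E ⊆ range f) (x : E) : ‖x‖ ≤ ‖evalOn f x‖ := by
  obtain ⟨g, hg, hgx⟩ := exists_dual_vector'' 𝕜 x
  have hg_mem : StrongDual.toWeakDual g ∈ closedUnitBall 𝕜 E :=
    mem_closedUnitBall.mpr (by simpa using hg)
  obtain ⟨k, hk⟩ := hf hg_mem
  calc ‖x‖ = ‖evalOn f x k‖ := by simp [hk, hgx]
    _ ≤ ‖evalOn f x‖ := (evalOn f x).norm_coe_le_norm k

def evalOnₗᵢ (f : C(K, WeakDual 𝕜 E)) (hf : range f = closedUnitBall 𝕜 E) :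
    E →ₗᵢ[𝕜] C(K, 𝕜) where
  toLinearMap := evalOn f
  norm_map' x := le_antisymm (norm_evalOn_apply_le (fun k => hf ▸ mem_range_self k) x)
    (norm_le_norm_evalOn_apply hf.ge x)

end WeakDual

end

theorem stmt1_general (κ : Cardinal.{u}) (hκ : ℵ₀ ≤ κ)
    (K : Type u) [TopologicalSpace K] [CompactSpace K]
    (huniv : ∀ (L : Type u) [TopologicalSpace L] [CompactSpace L] [T2Space L] [ConnectedSpace L],
      topWeight L ≤ κ → ∃ f : K → L, Continuous f ∧ Function.Surjective f)
    (X : Type u) [NormedAddCommGroup X] [NormedSpace ℝ X]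
    (hX : densityChar X ≤ κ) :
    Nonempty (X →ₗᵢ[ℝ] C(K, ℝ)) := by
  obtain ⟨f, hf, hf_surj⟩ := huniv (WeakDual.closedUnitBall ℝ X)
    (WeakDual.topWeight_closedUnitBall_le.trans (max_le hκ hX))
  refine ⟨WeakDual.evalOnₗᵢ ⟨Subtype.val ∘ f, continuous_subtype_val.comp hf⟩ ?_⟩
  rw [ContinuousMap.coe_mk, range_comp, hf_surj.range_eq, image_univ, Subtype.range_coe]

/-- If `K` is a connected compact Hausdorff space of weight at most `κ` which maps
continuously onto every connected compact Hausdorff space of weight at most `κ`, then every real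
Banach space of density character at most `κ` embeds linearly isometrically into `C(K, ℝ)`. -/
theorem stmt1 (κ : Cardinal.{u}) (hκ : ℵ₀ ≤ κ)
    (K : Type u) [TopologicalSpace K] [CompactSpace K] [T2Space K]
    [ConnectedSpace K] (hK : topWeight K ≤ κ)
    (huniv : ∀ (L : Type u) [TopologicalSpace L] [CompactSpace L] [T2Space L] [ConnectedSpace L],
      topWeight L ≤ κ → ∃ f : K → L, Continuous f ∧ Function.Surjective f)
    (X : Type u) [NormedAddCommGroup X] [NormedSpace ℝ X] [CompleteSpace X]
    (hX : densityChar X ≤ κ) :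
    Nonempty (X →ₗᵢ[ℝ] C(K, ℝ)) :=
  stmt1_general κ hκ K huniv X hX
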